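/- For the negative binomial distribution with parameters r > 1 and q ∈ (0,1), for every k ∈ ℕ₀ large enough that 2(r-1)/(k+2) < q/(1-q), the tail ratio satisfies (1 - P(k))/p(k+1) ≤ 2/q. -/

import Mathlib

/-!
The coefficients `Γ(k + r) / (Γ(r) k!)` are the generalized binomial coefficients
`C(r + k - 1, k)`, so the binomial series of `(1 - x)⁻ʳ` at `x = 1 - q` shows that the masses
sum to `1`, and `1 - P(k)` is the tail `∑_{n > k} p(n)`. The ratio
`p(n + 1) / p(n) = (n + r)(1 - q) / (n + 1)` is at most `1 - q/2` once
`2(r - 1)(1 - q) ≤ q(n + 1)`, which the hypothesis on `k` guarantees for all `n > k`; the tail is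
then dominated by a geometric series with sum `p(k + 1) / (q/2)`.
-/

open scoped Nat

theorem Real.Gamma_nat_add_eq_mul_ascPochhammer {r : ℝ} (hr : ∀ n : ℕ, r ≠ -n) (k : ℕ) :
    Real.Gamma (k + r) = Real.Gamma r * (ascPochhammer ℝ k).eval r := by
  induction k with
  | zero => simp
  | succ k ih =>
    have hkr : (k : ℝ) + r ≠ 0 := fun h => hr k (by linarith)
    rw [Nat.cast_succ, add_right_comm, Real.Gamma_add_one hkr, ih, ascPochhammer_succ_eval]
    ring

theorem Real.Gamma_nat_add_div_eq_choose {r : ℝ} (hr : ∀ n : ℕ, r ≠ -n) (k : ℕ) :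
    Real.Gamma (k + r) / (Real.Gamma r * k !) = Ring.choose (r + k - 1) k := by
  have hk : (k ! : ℝ) ≠ 0 := by positivity
  rw [← Ring.multichoose_eq, Real.Gamma_nat_add_eq_mul_ascPochhammer hr,
    ← Polynomial.ascPochhammer_smeval_eq_eval,
    ← Ring.factorial_nsmul_multichoose_eq_ascPochhammer, nsmul_eq_mul,
    mul_div_mul_left _ _ (Real.Gamma_ne_zero hr)]
  field_simp

theorem Real.hasSum_choose_mul_pow (a : ℝ) {x : ℝ} (hx : |x| < 1) :
    HasSum (fun n : ℕ => Ring.choose (a + n - 1) n * x ^ n) (1 / (1 - x) ^ a) := by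
  have h := (Real.one_div_one_sub_rpow_hasFPowerSeriesOnBall_zero a).hasSum
    (y := x) (by simpa [enorm_eq_nnnorm, ← NNReal.coe_lt_coe] using hx)
  simpa [FormalMultilinearSeries.ofScalars_apply_eq, mul_comm] using h

theorem tsum_nat_add_le_div_one_sub_of_succ_le_mul {f : ℕ → ℝ} (hf : Summable f) {c : ℝ}
    (hc0 : 0 ≤ c) (hc1 : c < 1) {N : ℕ} (h : ∀ n ≥ N, f (n + 1) ≤ c * f n) :
    ∑' i, f (i + N) ≤ f N / (1 - c) := by
  have hgeom : ∀ i, f (i + N) ≤ f N * c ^ i := by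
    intro i
    induction i with
    | zero => simp
    | succ i ih =>
      calc f (i + 1 + N) = f (i + N + 1) := by rw [add_right_comm]
        _ ≤ c * f (i + N) := h _ (Nat.le_add_left N i)
        _ ≤ c * (f N * c ^ i) := mul_le_mul_of_nonneg_left ih hc0
        _ = f N * c ^ (i + 1) := by ring
  calc ∑' i, f (i + N) ≤ ∑' i, f N * c ^ i :=
        Summable.tsum_le_tsum hgeom ((summable_nat_add_iff N).mpr hf)
          ((summable_geometric_of_lt_one hc0 hc1).mul_left _)
    _ = f N / (1 - c) := by
      rw [tsum_mul_left, tsum_geometric_of_lt_one hc0 hc1, div_eq_mul_inv]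

noncomputable def negBinomialMass (r q : ℝ) (k : ℕ) : ℝ :=
  Real.Gamma (k + r) / (Real.Gamma r * k !) * (1 - q) ^ k * q ^ r

section negBinomialMass

variable {r q : ℝ}

theorem hasSum_negBinomialMass (hr : ∀ n : ℕ, r ≠ -n) (hq : |1 - q| < 1) :
    HasSum (negBinomialMass r q) 1 := by
  have hq0 : 0 < q := by linarith [(abs_lt.mp hq).2]
  have h := (Real.hasSum_choose_mul_pow r hq).mul_right (q ^ r)
  rw [sub_sub_cancel, one_div, inv_mul_cancel₀ (Real.rpow_pos_of_pos hq0 r).ne'] at h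
  refine h.congr_fun fun k => ?_
  rw [negBinomialMass, Real.Gamma_nat_add_div_eq_choose hr]

theorem negBinomialMass_pos (hr : 0 < r) (hq0 : 0 < q) (hq1 : q < 1) (k : ℕ) :
    0 < negBinomialMass r q k := by
  have := Real.Gamma_pos_of_pos hr
  have := Real.Gamma_pos_of_pos (by positivity : 0 < (k : ℝ) + r)
  have : 0 < 1 - q := sub_pos.mpr hq1
  unfold negBinomialMass
  positivity

theorem negBinomialMass_succ_mul (hr : 0 < r) (k : ℕ) :
    (k + 1) * negBinomialMass r q (k + 1) = (k + r) * (1 - q) * negBinomialMass r q k := by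
  have hkr : (k : ℝ) + r ≠ 0 := by positivity
  have := (Real.Gamma_pos_of_pos hr).ne'
  simp only [negBinomialMass, Nat.cast_succ, add_right_comm _ (1 : ℝ), Real.Gamma_add_one hkr,
    Nat.factorial_succ, Nat.cast_mul, pow_succ]
  field_simp

theorem negBinomialMass_succ_le (hr : 0 < r) (hq0 : 0 < q) (hq1 : q < 1) {n : ℕ}
    (hn : 2 * (r - 1) * (1 - q) ≤ q * (n + 1)) :
    negBinomialMass r q (n + 1) ≤ (1 - q / 2) * negBinomialMass r q n := by
  have hpos := negBinomialMass_pos hr hq0 hq1 n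
  have hrec := negBinomialMass_succ_mul (q := q) hr n
  refine le_of_mul_le_mul_left ?_ (by positivity : (0 : ℝ) < n + 1)
  rw [hrec]
  nlinarith

end negBinomialMass

/-- Negative binomial tail-ratio bound for `r > 1`: if `2(r-1)/(k+2) < q/(1-q)` then
`(1 - P(k))/p(k+1) ≤ 2/q`. -/
theorem stmt_10 (r q : ℝ) (hr : 1 < r) (hq0 : 0 < q) (hq1 : q < 1)
    (p : ℕ → ℝ) (P : ℕ → ℝ)
    (hp : ∀ k : ℕ, p k = Real.Gamma ((k : ℝ) + r) / (Real.Gamma r * (Nat.factorial k : ℝ))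
      * (1 - q) ^ k * q ^ r)
    (hP : ∀ k : ℕ, P k = ∑ ℓ ∈ Finset.range (k + 1), p ℓ) :
    ∀ k : ℕ, 2 * (r - 1) / ((k : ℝ) + 2) < q / (1 - q) →
      (1 - P k) / p (k + 1) ≤ 2 / q := by
  intro k hk
  obtain rfl : p = negBinomialMass r q := funext hp
  have hr0 : 0 < r := by linarith
  have hmass : HasSum (negBinomialMass r q) 1 :=
    hasSum_negBinomialMass (fun n h => by linarith [n.cast_nonneg (α := ℝ)])
      (by rw [abs_lt]; constructor <;> linarith)
  have htail : 1 - P k = ∑' i, negBinomialMass r q (i + (k + 1)) := by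
    rw [hP, ← hmass.tsum_eq, ← hmass.summable.sum_add_tsum_nat_add (k + 1)]
    ring
  have hkey : 2 * (r - 1) * (1 - q) < q * (k + 2) := by
    rwa [div_lt_div_iff₀ (by positivity) (by linarith)] at hk
  have hratio : ∀ n ≥ k + 1,
      negBinomialMass r q (n + 1) ≤ (1 - q / 2) * negBinomialMass r q n := by
    intro n hn
    have : (k : ℝ) + 1 ≤ n := by exact_mod_cast hn
    exact negBinomialMass_succ_le hr0 hq0 hq1 (by nlinarith)
  rw [htail, div_le_iff₀ (negBinomialMass_pos hr0 hq0 hq1 _)]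
  calc _ ≤ negBinomialMass r q (k + 1) / (1 - (1 - q / 2)) :=
        tsum_nat_add_le_div_one_sub_of_succ_le_mul hmass.summable (by linarith) (by linarith)
          hratio
    _ = 2 / q * negBinomialMass r q (k + 1) := by rw [sub_sub_cancel]; field_simp
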